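/- For every natural number n, catsize(n) ≤ bitsize(n); that is, the representation complexity of n in the Catalan-family representation never exceeds the number of binary digits of n. -/

import Mathlib

/-- The pairing function `c`. -/
def c (i j : ℕ) : ℕ := if Odd j then 2 ^ (i + 1) * j else 2 ^ (i + 1) * (j + 1) - 1

/-- The inverse of `c` on positive naturals (returns `(0,0)` at `0`). -/
def c' (n : ℕ) : ℕ × ℕ :=
  (padicValNat 2 (n + n % 2) - 1, (n + n % 2) / 2 ^ padicValNat 2 (n + n % 2) - n % 2)

lemma c'_fst_lt {n : ℕ} (hn : 0 < n) : (c' n).1 < n := by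
  have hm : 0 < n + n % 2 := by omega
  have hdvd : (2 : ℕ) ^ padicValNat 2 (n + n % 2) ∣ (n + n % 2) := pow_padicValNat_dvd
  have hle : (2 : ℕ) ^ padicValNat 2 (n + n % 2) ≤ n + n % 2 := Nat.le_of_dvd hm hdvd
  have hlt : padicValNat 2 (n + n % 2) < 2 ^ padicValNat 2 (n + n % 2) := by
    first | exact Nat.lt_two_pow_self | exact Nat.lt_two_pow_self _
  simp only [c']
  generalize hv : padicValNat 2 (n + n % 2) = v at *
  generalize hp : (2 : ℕ) ^ v = p at *
  omega

lemma c'_snd_lt {n : ℕ} (hn : 0 < n) : (c' n).2 < n := by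
  have hm : 0 < n + n % 2 := by omega
  have h2 : (2 : ℕ) ∣ (n + n % 2) := by omega
  have hv : 1 ≤ padicValNat 2 (n + n % 2) := one_le_padicValNat_of_dvd hm.ne' h2
  have h2le : (2 : ℕ) ≤ 2 ^ padicValNat 2 (n + n % 2) := by
    calc (2:ℕ) = 2 ^ 1 := (pow_one 2).symm
    _ ≤ 2 ^ padicValNat 2 (n + n % 2) := Nat.pow_le_pow_right (by norm_num) hv
  have hle : (n + n % 2) / 2 ^ padicValNat 2 (n + n % 2) ≤ (n + n % 2) / 2 :=
    Nat.div_le_div_left h2le (by norm_num)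
  simp only [c']
  generalize hq : (n + n % 2) / 2 ^ padicValNat 2 (n + n % 2) = q at *
  omega

lemma c'_fst_lt_of_lt {m n : ℕ} (h : m < n) : (c' m).1 < n := by
  rcases Nat.eq_zero_or_pos m with rfl | hm
  · simp [c']; omega
  · exact lt_trans (c'_fst_lt hm) h

lemma c'_snd_lt_of_lt {m n : ℕ} (h : m < n) : (c' m).2 < n := by
  rcases Nat.eq_zero_or_pos m with rfl | hm
  · simp [c']; omega
  · exact lt_trans (c'_snd_lt hm) h

def catsize : ℕ → ℕ
  | 0 => 0
  | n + 1 => 1 + catsize (c' (n + 1)).1 + catsize (c' (n + 1)).2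
  decreasing_by
  · exact c'_fst_lt (Nat.succ_pos n)
  · exact c'_snd_lt (Nat.succ_pos n)

def bitsize : ℕ → ℕ
  | 0 => 0
  | n + 1 => 1 + (c' (n + 1)).1 + bitsize (c' (n + 1)).2
  decreasing_by
  · exact c'_snd_lt (Nat.succ_pos n)

/-! With `n + n % 2 = 2 ^ v * q` and `v ≥ 1`, `q ≥ 1`, we have `c' n = (v - 1, q - n % 2)`, and
`v + q ≤ 2 ^ v * q` gives `i + j < n` for `(i, j) = c' n`; hence `catsize n ≤ n` by induction.
Then `catsize n = 1 + catsize i + catsize j ≤ 1 + i + bitsize j`, bounding the first component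
by `catsize i ≤ i` and the second by induction. -/

lemma add_le_two_pow_mul {v q : ℕ} (hq : 1 ≤ q) : v + q ≤ 2 ^ v * q := by
  have hv : v + 1 ≤ 2 ^ v := Nat.lt_two_pow_self
  nlinarith

lemma c'_fst_add_snd_lt {n : ℕ} (hn : 0 < n) : (c' n).1 + (c' n).2 < n := by
  simp only [c']
  generalize hv : padicValNat 2 (n + n % 2) = v
  obtain ⟨q, hq⟩ : 2 ^ v ∣ n + n % 2 := hv ▸ pow_padicValNat_dvd
  have hv_pos : 1 ≤ v := hv ▸ one_le_padicValNat_of_dvd (by omega) (by omega)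
  have hq_pos : 1 ≤ q := Nat.pos_of_ne_zero (by rintro rfl; omega)
  have key := add_le_two_pow_mul (v := v) hq_pos
  rw [hq, Nat.mul_div_cancel_left _ (Nat.two_pow_pos _)]
  omega

lemma catsize_le_self (n : ℕ) : catsize n ≤ n := by
  induction n using Nat.strong_induction_on with
  | _ n ih =>
    rcases n with _ | m
    · simp [catsize]
    · have hsum := c'_fst_add_snd_lt m.add_one_pos
      have hi := ih _ (c'_fst_lt m.add_one_pos)
      have hj := ih _ (c'_snd_lt m.add_one_pos)
      rw [catsize]
      omega

theorem catsize_le_bitsize (n : ℕ) : catsize n ≤ bitsize n := by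
  induction n using Nat.strong_induction_on with
  | _ n ih =>
    rcases n with _ | m
    · simp [catsize, bitsize]
    · have hi := catsize_le_self (c' (m + 1)).1
      have hj := ih _ (c'_snd_lt m.add_one_pos)
      rw [catsize, bitsize]
      omega
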